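/- arXiv:math/0611861 — 3 statements merged into one kernel-verified Lean document; each statement's English description precedes it below -/
import Mathlib

section
/- Let V be a finite-dimensional F₂-vector space and v ∈ V a nonzero vector. Then for every nonzero w ∈ V, the product over all linear forms l : V → F₂ with l(v) = 1 of the values l(w) equals 1 if w = v, and equals 0 otherwise. In other words, the polynomial function ∏_{l ∈ V*, l(v)=1} l is the indicator function of {v} on V ∖ {0}. -/
open Module Submodule

theorem Module.exists_dual_apply_eq_one_apply_eq_zero_of_notMem_span_singleton
    {K V : Type*} [Field K] [AddCommGroup V] [Module K V] {v w : V}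
    (hv : v ∉ K ∙ w) : ∃ l : Dual K V, l v = 1 ∧ l w = 0 := by
  obtain ⟨f, hfv, hfw⟩ := exists_dual_map_eq_bot_of_notMem hv inferInstance
  refine ⟨(f v)⁻¹ • f, inv_mul_cancel₀ hfv, ?_⟩
  have hw : f w ∈ (K ∙ w).map f := mem_map_of_mem (mem_span_singleton_self w)
  rw [hfw, mem_bot] at hw
  simp [hw]

theorem mem_span_singleton_zmod_two {V : Type*} [AddCommGroup V] [Module (ZMod 2) V]
    {v w : V} : v ∈ ZMod 2 ∙ w ↔ v = 0 ∨ v = w := by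
  rw [mem_span_singleton]
  constructor
  · rintro ⟨c, rfl⟩
    rcases (by decide : ∀ c : ZMod 2, c = 0 ∨ c = 1) c with rfl | rfl <;> simp
  · rintro (rfl | rfl)
    exacts [⟨0, zero_smul _ _⟩, ⟨1, one_smul _ _⟩]

open Classical in
theorem stmt1_general (V : Type) [AddCommGroup V] [Module (ZMod 2) V]
    [FiniteDimensional (ZMod 2) V]
    (v : V) (hv : v ≠ 0) (w : V) :
    (∏ᶠ (l : Module.Dual (ZMod 2) V) (_ : l v = 1), l w) = if w = v then 1 else 0 := by
  by_cases hwv : w = v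
  · subst hwv
    rw [if_pos rfl]
    exact finprod_eq_one_of_forall_eq_one fun l => by simp [finprod_eq_if]
  · rw [if_neg hwv]
    have hv_span : v ∉ ZMod 2 ∙ w := by
      rw [mem_span_singleton_zmod_two]
      exact fun h => h.elim hv (fun h => hwv h.symm)
    obtain ⟨l, hlv, hlw⟩ :=
      exists_dual_apply_eq_one_apply_eq_zero_of_notMem_span_singleton hv_span
    -- `∏ᶠ` is junk `1` on an infinite support, so finiteness of `V*` is what makes the zero factor count.
    have : Finite (Dual (ZMod 2) V) := Module.finite_of_finite (ZMod 2)
    refine finprod_eq_zero _ l ?_ (Set.toFinite _)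
    rw [finprod_eq_if, if_pos hlv, hlw]

open Classical in
theorem stmt1 (V : Type) [AddCommGroup V] [Module (ZMod 2) V]
    [FiniteDimensional (ZMod 2) V]
    (v : V) (hv : v ≠ 0) (w : V) (hw : w ≠ 0) :
    (∏ᶠ (l : Module.Dual (ZMod 2) V) (_ : l v = 1), l w) = if w = v then 1 else 0 :=
  stmt1_general V v hv w
end

section
/- Let V be a finite-dimensional F₂-vector space and W, W′ two n-dimensional subspaces of V with W ≠ W′. Then there exists an n-dimensional subspace H of V* such that H ∩ W^⊥ = {0} but H ∩ (W′)^⊥ ≠ {0}. -/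
theorem stmt4 (V : Type) [AddCommGroup V] [Module (ZMod 2) V]
    [FiniteDimensional (ZMod 2) V]
    (n : ℕ) (W W' : Submodule (ZMod 2) V)
    (hW : Module.finrank (ZMod 2) W = n) (hW' : Module.finrank (ZMod 2) W' = n)
    (hne : W ≠ W') :
    ∃ H : Submodule (ZMod 2) (Module.Dual (ZMod 2) V),
      Module.finrank (ZMod 2) H = n ∧ H ⊓ W.dualAnnihilator = ⊥ ∧
        H ⊓ W'.dualAnnihilator ≠ ⊥ := by
  classical
  let K := ZMod 2
  let d := Module.finrank (ZMod 2) V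
  -- finranks of annihilators
  have hannW : Module.finrank (ZMod 2) W.dualAnnihilator = d - n := by
    have h1 := Submodule.finrank_quotient_add_finrank W
    have h2 : Module.finrank (ZMod 2) (V ⧸ W) = Module.finrank (ZMod 2) W.dualAnnihilator := (Subspace.quotEquivAnnihilator W).finrank_eq
    omega
  have hannW' : Module.finrank (ZMod 2) W'.dualAnnihilator = d - n := by
    have h1 := Submodule.finrank_quotient_add_finrank W'
    have h2 : Module.finrank (ZMod 2) (V ⧸ W') = Module.finrank (ZMod 2) W'.dualAnnihilator := (Subspace.quotEquivAnnihilator W').finrank_eq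
    omega
  have hnd : n ≤ d := hW ▸ Submodule.finrank_le W
  -- the annihilators are distinct
  have hanne : W.dualAnnihilator ≠ W'.dualAnnihilator := by
    intro h
    exact hne (Subspace.dualAnnihilator_inj.mp h)
  -- there is l ∈ W'^⊥ \ W^⊥
  have hnotle : ¬ W'.dualAnnihilator ≤ W.dualAnnihilator := by
    intro hle
    exact hanne (Submodule.eq_of_le_of_finrank_le hle (by rw [hannW, hannW'])).symm
  obtain ⟨l, hlW', hlW⟩ := SetLike.not_le_iff_exists.mp hnotle
  have hl0 : l ≠ 0 := fun h => hlW (h ▸ (Submodule.zero_mem _))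
  -- span l ⊓ W^⊥ = ⊥
  have hspan : (Submodule.span (ZMod 2) {l}) ⊓ W.dualAnnihilator = ⊥ := by
    rw [Submodule.eq_bot_iff]
    rintro x ⟨hx1, hx2⟩
    obtain ⟨a, rfl⟩ := Submodule.mem_span_singleton.mp hx1
    rcases (by decide : ∀ a : ZMod 2, a = 0 ∨ a = 1) a with rfl | rfl
    · simp
    · rw [one_smul] at hx2; exact absurd hx2 hlW
  -- choose a complement C of span l ⊔ W^⊥
  obtain ⟨C, hC⟩ := Submodule.exists_isCompl (Submodule.span (ZMod 2) {l} ⊔ W.dualAnnihilator)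
  refine ⟨Submodule.span (ZMod 2) {l} ⊔ C, ?_, ?_, ?_⟩
  rotate_left
  · -- H ⊓ W^⊥ = ⊥
    rw [Submodule.eq_bot_iff]
    rintro x ⟨hx1, hx2⟩
    obtain ⟨y, hy, c, hc, rfl⟩ := Submodule.mem_sup.mp hx1
    have hcmem : c ∈ (Submodule.span (ZMod 2) {l} ⊔ W.dualAnnihilator) ⊓ C := by
      refine ⟨?_, hc⟩
      have : c = (y + c) - y := by abel
      rw [this]
      exact Submodule.sub_mem _ (Submodule.mem_sup_right hx2) (Submodule.mem_sup_left hy)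
    rw [hC.inf_eq_bot] at hcmem
    rw [hcmem, add_zero] at hx2 ⊢
    have : y ∈ Submodule.span (ZMod 2) {l} ⊓ W.dualAnnihilator := ⟨hy, hx2⟩
    rwa [hspan] at this
  · -- H ⊓ W'^⊥ ≠ ⊥
    intro h
    have : l ∈ (⊥ : Submodule (ZMod 2) (Module.Dual (ZMod 2) V)) := by
      rw [← h]
      exact ⟨Submodule.mem_sup_left (Submodule.mem_span_singleton_self l), hlW'⟩
    exact hl0 (Submodule.mem_bot _ |>.mp this)
  · -- finrank H = n : H is a complement of W^⊥
    have hbot : (Submodule.span (ZMod 2) {l} ⊔ C) ⊓ W.dualAnnihilator = ⊥ := by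
      rw [Submodule.eq_bot_iff]
      rintro x ⟨hx1, hx2⟩
      obtain ⟨y, hy, c, hc, rfl⟩ := Submodule.mem_sup.mp hx1
      have hcmem : c ∈ (Submodule.span (ZMod 2) {l} ⊔ W.dualAnnihilator) ⊓ C := by
        refine ⟨?_, hc⟩
        have : c = (y + c) - y := by abel
        rw [this]
        exact Submodule.sub_mem _ (Submodule.mem_sup_right hx2) (Submodule.mem_sup_left hy)
      rw [hC.inf_eq_bot] at hcmem
      rw [hcmem, add_zero] at hx2 ⊢
      have : y ∈ Submodule.span (ZMod 2) {l} ⊓ W.dualAnnihilator := ⟨hy, hx2⟩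
      rwa [hspan] at this
    have htop : (Submodule.span (ZMod 2) {l} ⊔ C) ⊔ W.dualAnnihilator = ⊤ := by
      rw [sup_right_comm]
      exact hC.sup_eq_top
    have hcompl : IsCompl (Submodule.span (ZMod 2) {l} ⊔ C) W.dualAnnihilator :=
      ⟨disjoint_iff.mpr hbot, codisjoint_iff.mpr htop⟩
    have := Submodule.finrank_add_eq_of_isCompl hcompl
    rw [hannW, Subspace.dual_finrank_eq] at this
    omega
end

section
/- Let V be a finite-dimensional F₂-vector space and W ∈ Gr_n(V) an n-dimensional subspace. The product over all H ∈ Gr_n(V*) with ⟨H, W⟩ = 1 of the functions W′ ↦ ⟨H, W′⟩ equals the indicator function of {W} on the set Gr_n(V) of n-dimensional subspaces of V, where ⟨H, U⟩ ∈ F₂ is 1 if H ∩ U^⊥ = {0} and 0 otherwise. -/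
open Classical in
/-- The pairing `⟨H, U⟩ ∈ F₂`: `1` if `H ∩ U^⊥ = 0`, `0` otherwise. -/
noncomputable def grPair (V : Type) [AddCommGroup V] [Module (ZMod 2) V]
    (H : Submodule (ZMod 2) (Module.Dual (ZMod 2) V)) (U : Submodule (ZMod 2) V) : ZMod 2 :=
  if H ⊓ U.dualAnnihilator = ⊥ then 1 else 0

open Classical Module Submodule in
/-- Extend a vector outside `A` to a complement of `A`. -/
theorem aux_compl {K V : Type*} [Field K] [AddCommGroup V] [Module K V]
    (A : Submodule K V) (x : V) (hx : x ∉ A) :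
    ∃ H : Submodule K V, IsCompl H A ∧ x ∈ H := by
  have hx0 : x ≠ 0 := fun h => hx (h ▸ A.zero_mem)
  set S : Submodule K V := K ∙ x with hS
  have hSA : Disjoint S A := by
    rw [disjoint_comm]
    exact (Submodule.disjoint_span_singleton' hx0).mpr hx
  obtain ⟨C, hC⟩ := Submodule.exists_isCompl (S ⊔ A)
  refine ⟨S ⊔ C, ⟨?_, ?_⟩, Submodule.mem_sup_left (Submodule.mem_span_singleton_self x)⟩
  · rw [disjoint_iff]
    have h1 : (S ⊔ C) ⊓ (S ⊔ A) = S ⊔ C ⊓ (S ⊔ A) :=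
      sup_inf_assoc_of_le _ le_sup_left
    have h2 : C ⊓ (S ⊔ A) = ⊥ := by
      exact hC.symm.inf_eq_bot
    have key : (S ⊔ C) ⊓ A ≤ S := by
      calc (S ⊔ C) ⊓ A ≤ (S ⊔ C) ⊓ (S ⊔ A) := inf_le_inf_left _ le_sup_right
        _ = S := by rw [h1, h2, sup_bot_eq]
    have : (S ⊔ C) ⊓ A ≤ S ⊓ A := le_inf key inf_le_right
    rw [hSA.eq_bot] at this
    exact le_bot_iff.mp this
  · rw [codisjoint_iff]
    calc S ⊔ C ⊔ A = S ⊔ A ⊔ C := by rw [sup_right_comm]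
      _ = ⊤ := hC.sup_eq_top

open Module in
open Classical in
theorem stmt5 (V : Type) [AddCommGroup V] [Module (ZMod 2) V]
    [FiniteDimensional (ZMod 2) V] (n : ℕ)
    (W : Submodule (ZMod 2) V) (hW : Module.finrank (ZMod 2) W = n)
    (W' : Submodule (ZMod 2) V) (hW' : Module.finrank (ZMod 2) W' = n) :
    (∏ᶠ (H : Submodule (ZMod 2) (Module.Dual (ZMod 2) V))
        (_ : Module.finrank (ZMod 2) H = n ∧ grPair V H W = 1), grPair V H W') =
      if W' = W then 1 else 0 := by
  have hVfin : Finite V := Module.finite_of_finite (ZMod 2)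
  have hDfin : Finite (Module.Dual (ZMod 2) V) := Module.finite_of_finite (ZMod 2)
  have hSubFin : Finite (Submodule (ZMod 2) (Module.Dual (ZMod 2) V)) :=
    Finite.of_injective _ (SetLike.coe_injective (A := Submodule (ZMod 2) (Module.Dual (ZMod 2) V)))
  have := Fintype.ofFinite (Submodule (ZMod 2) (Module.Dual (ZMod 2) V))
  rw [finprod_eq_prod_of_fintype]
  simp only [finprod_eq_if]
  by_cases hWW : W' = W
  · subst hWW
    rw [if_pos rfl]
    apply Finset.prod_eq_one
    intro H _
    split_ifs with h
    · exact h.2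
    · rfl
  · rw [if_neg hWW]
    set A := W.dualAnnihilator with hAdef
    set B := W'.dualAnnihilator with hBdef
    have hAB : A ≠ B := by
      intro h
      have := congrArg Submodule.dualCoannihilator h
      rw [hAdef, hBdef, Subspace.dualAnnihilator_dualCoannihilator_eq,
        Subspace.dualAnnihilator_dualCoannihilator_eq] at this
      exact hWW this.symm
    have hcoA : A.dualCoannihilator = W := Subspace.dualAnnihilator_dualCoannihilator_eq
    have hcoB : B.dualCoannihilator = W' := Subspace.dualAnnihilator_dualCoannihilator_eq
    have hrA : finrank (ZMod 2) A + n = finrank (ZMod 2) V := by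
      have h := Subspace.finrank_add_finrank_dualCoannihilator_eq A
      rwa [hcoA, hW] at h
    have hrB : finrank (ZMod 2) B + n = finrank (ZMod 2) V := by
      have h := Subspace.finrank_add_finrank_dualCoannihilator_eq B
      rwa [hcoB, hW'] at h
    have hBA : ¬ B ≤ A := by
      intro h
      exact hAB (Submodule.eq_of_le_of_finrank_le h (by omega)).symm
    obtain ⟨x, hxB, hxA⟩ := SetLike.not_le_iff_exists.mp hBA
    obtain ⟨H, hHc, hxH⟩ := aux_compl A x hxA
    have hHA : H ⊓ A = ⊥ := hHc.inf_eq_bot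
    have hHn : finrank (ZMod 2) H = n := by
      have h1 := Submodule.finrank_add_eq_of_isCompl hHc
      rw [Subspace.dual_finrank_eq] at h1
      omega
    have hgW : grPair V H W = 1 := by rw [grPair, if_pos hHA]
    have hgW' : grPair V H W' = 0 := by
      rw [grPair, if_neg]
      intro h
      have hx0 : x ≠ 0 := fun h0 => hxA (h0 ▸ A.zero_mem)
      have hxm : x ∈ H ⊓ B := Submodule.mem_inf.mpr ⟨hxH, hxB⟩
      rw [hBdef] at hxm
      rw [h] at hxm
      exact hx0 (Submodule.mem_bot _ |>.mp hxm)
    refine Finset.prod_eq_zero (Finset.mem_univ H) ?_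
    rw [if_pos ⟨hHn, hgW⟩, hgW']
end
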